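/- A finite sequence of alternating quantum-classical interactions I_A^{(1)}, I_B^{(1)}, ..., I_A^{(n)}, I_B^{(n)}, where each I_A^{(k)} acts only on system A and the classical mediator G and each I_B^{(k)} acts only on system B and G, maps every initial state of the form σ_AB ⊗ p_G with σ_AB separable to a state whose AB-marginal is separable. In other words, interactions between two quantum systems mediated by a classical system cannot generate entanglement (GPT no-go theorem, quantum instance). -/

import Mathlib

open Matrix Finset
open scoped Kronecker ComplexOrder

/-- Extend a map on `A`-matrices to act on the first factor of `A × R`-matrices
(identity on the second factor). -/
noncomputable def blockFst {A B R : Type*} [Fintype A] [Fintype B] [Fintype R]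
    (E : Matrix A A ℂ →ₗ[ℂ] Matrix B B ℂ)
    (M : Matrix (A × R) (A × R) ℂ) : Matrix (B × R) (B × R) ℂ :=
  fun p q => E (fun i j => M (i, p.2) (j, q.2)) p.1 q.1

/-- Extend a map on `B`-matrices to act on the second factor of `R × B`-matrices. -/
noncomputable def blockSnd {B C R : Type*} [Fintype B] [Fintype C] [Fintype R]
    (E : Matrix B B ℂ →ₗ[ℂ] Matrix C C ℂ)
    (M : Matrix (R × B) (R × B) ℂ) : Matrix (R × C) (R × C) ℂ :=
  fun p q => E (fun i j => M (p.1, i) (q.1, j)) p.2 q.2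

/-- Complete positivity: the extension by any finite-dimensional identity preserves
positive semidefiniteness. -/
def IsCP {A : Type*} [Fintype A] (E : Matrix A A ℂ →ₗ[ℂ] Matrix A A ℂ) : Prop :=
  ∀ (R : Type) [Fintype R] [DecidableEq R],
    ∀ M : Matrix (A × R) (A × R) ℂ, M.PosSemidef → (blockFst E M).PosSemidef

def TraceNonincreasing {A : Type*} [Fintype A]
    (E : Matrix A A ℂ →ₗ[ℂ] Matrix A A ℂ) : Prop :=
  ∀ M : Matrix A A ℂ, M.PosSemidef → ((E M).trace).re ≤ (M.trace).re

def TracePreserving {A : Type*} [Fintype A]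
    (E : Matrix A A ℂ →ₗ[ℂ] Matrix A A ℂ) : Prop :=
  ∀ M : Matrix A A ℂ, (E M).trace = M.trace

/-- The tensor product map `E_A ⊗ E_B` acting on `(A × B)`-matrices. -/
noncomputable def prodMap {A B : Type*} [Fintype A] [Fintype B]
    (EA : Matrix A A ℂ →ₗ[ℂ] Matrix A A ℂ) (EB : Matrix B B ℂ →ₗ[ℂ] Matrix B B ℂ)
    (M : Matrix (A × B) (A × B) ℂ) : Matrix (A × B) (A × B) ℂ :=
  blockSnd EB (blockFst EA M)

/-- The cone of separable positive operators. -/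
def SepCone {A B : Type*} [Fintype A] [Fintype B]
    (M : Matrix (A × B) (A × B) ℂ) : Prop :=
  ∃ (n : ℕ) (σA : Fin n → Matrix A A ℂ) (σB : Fin n → Matrix B B ℂ),
    (∀ i, (σA i).PosSemidef) ∧ (∀ i, (σB i).PosSemidef) ∧
    M = ∑ i, σA i ⊗ₖ σB i

def IsDensity {A : Type*} [Fintype A] (ρ : Matrix A A ℂ) : Prop :=
  ρ.PosSemidef ∧ ρ.trace = 1

/-- Separable state: convex combination of product density operators. -/
def SepState {A B : Type*} [Fintype A] [Fintype B]
    (M : Matrix (A × B) (A × B) ℂ) : Prop :=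
  ∃ (n : ℕ) (p : Fin n → ℝ) (σA : Fin n → Matrix A A ℂ) (σB : Fin n → Matrix B B ℂ),
    (∀ i, 0 ≤ p i) ∧ (∑ i, p i = 1) ∧
    (∀ i, IsDensity (σA i)) ∧ (∀ i, IsDensity (σB i)) ∧
    M = ∑ i, (p i : ℂ) • (σA i ⊗ₖ σB i)

/-- One round of an A–G quantum-classical interaction acting on a `G`-indexed ensemble of
joint `A ⊗ B` operators: the classical register is measured and updated while the CP map
`E g g'` acts locally on `A`. -/
noncomputable def stepA {A B G : Type*} [Fintype A] [Fintype B] [Fintype G]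
    (E : G → G → (Matrix A A ℂ →ₗ[ℂ] Matrix A A ℂ))
    (ρ : G → Matrix (A × B) (A × B) ℂ) : G → Matrix (A × B) (A × B) ℂ :=
  fun g' => ∑ g, blockFst (E g g') (ρ g)

/-- One round of a B–G quantum-classical interaction, acting locally on `B`. -/
noncomputable def stepB {A B G : Type*} [Fintype A] [Fintype B] [Fintype G]
    (E : G → G → (Matrix B B ℂ →ₗ[ℂ] Matrix B B ℂ))
    (ρ : G → Matrix (A × B) (A × B) ℂ) : G → Matrix (A × B) (A × B) ℂ :=
  fun g' => ∑ g, blockSnd (E g g') (ρ g)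

/-- A quantum-classical interaction: each branch is completely positive and for each classical
input the total map is trace preserving. -/
def IsQCInteraction {A G : Type*} [Fintype A] [Fintype G]
    (E : G → G → (Matrix A A ℂ →ₗ[ℂ] Matrix A A ℂ)) : Prop :=
  (∀ g g', IsCP (E g g')) ∧
  (∀ g, ∀ M : Matrix A A ℂ, ∑ g', ((E g g') M).trace = M.trace)

/-- `n` rounds of alternating A–G and B–G quantum-classical interactions. -/
noncomputable def evolve {A B G : Type*} [Fintype A] [Fintype B] [Fintype G]
    (IA : ℕ → G → G → (Matrix A A ℂ →ₗ[ℂ] Matrix A A ℂ))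
    (IB : ℕ → G → G → (Matrix B B ℂ →ₗ[ℂ] Matrix B B ℂ)) :
    ℕ → (G → Matrix (A × B) (A × B) ℂ) → (G → Matrix (A × B) (A × B) ℂ)
  | 0, ρ => ρ
  | n + 1, ρ => stepB (IB n) (stepA (IA n) (evolve IA IB n ρ))

/-!
A round of interaction sends the branches `ρ g` to `g' ↦ ∑ g, (E g g' ⊗ id) (ρ g)`. A positive map
acting on one tensor factor sends `σA ⊗ σB` to `E σA ⊗ σB`, so it maps the cone of separable
operators into itself; the cone is closed under sums and nonnegative scaling, hence by induction
every branch of the evolved ensemble stays separable, and so does their sum, the `AB`-marginal.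
-/

section LocalMaps

variable {A A' B B' R : Type*} [Fintype A] [Fintype A'] [Fintype B] [Fintype B'] [Fintype R]

theorem blockFst_kronecker (E : Matrix A A ℂ →ₗ[ℂ] Matrix A' A' ℂ)
    (σA : Matrix A A ℂ) (σB : Matrix B B ℂ) :
    blockFst E (σA ⊗ₖ σB) = E σA ⊗ₖ σB := by
  ext ⟨i, k⟩ ⟨j, l⟩
  have hslice : (fun a b => σA a b * σB k l) = σB k l • σA := by
    ext a b; simp [mul_comm]
  simp only [blockFst, kronecker_apply, hslice, _root_.map_smul, Matrix.smul_apply, smul_eq_mul,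
    mul_comm]

theorem blockSnd_kronecker (E : Matrix B B ℂ →ₗ[ℂ] Matrix B' B' ℂ)
    (σA : Matrix A A ℂ) (σB : Matrix B B ℂ) :
    blockSnd E (σA ⊗ₖ σB) = σA ⊗ₖ E σB := by
  ext ⟨i, k⟩ ⟨j, l⟩
  have hslice : (fun a b => σA i j * σB a b) = σA i j • σB := rfl
  simp only [blockSnd, kronecker_apply, hslice, _root_.map_smul, Matrix.smul_apply, smul_eq_mul]

theorem blockFst_sum {ι : Type*} (s : Finset ι) (E : Matrix A A ℂ →ₗ[ℂ] Matrix A' A' ℂ)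
    (f : ι → Matrix (A × R) (A × R) ℂ) :
    blockFst E (∑ i ∈ s, f i) = ∑ i ∈ s, blockFst E (f i) := by
  ext p q
  have hslice : Matrix.of (fun i j => (∑ k ∈ s, f k) (i, p.2) (j, q.2))
      = ∑ k ∈ s, Matrix.of fun i j => f k (i, p.2) (j, q.2) := by
    ext i j; simp [Matrix.sum_apply]
  show E (Matrix.of fun i j => (∑ k ∈ s, f k) (i, p.2) (j, q.2)) p.1 q.1 = _
  rw [hslice, map_sum, Matrix.sum_apply, Matrix.sum_apply]
  rfl

theorem blockSnd_sum {ι : Type*} (s : Finset ι) (E : Matrix B B ℂ →ₗ[ℂ] Matrix B' B' ℂ)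
    (f : ι → Matrix (R × B) (R × B) ℂ) :
    blockSnd E (∑ i ∈ s, f i) = ∑ i ∈ s, blockSnd E (f i) := by
  ext p q
  have hslice : Matrix.of (fun i j => (∑ k ∈ s, f k) (p.1, i) (q.1, j))
      = ∑ k ∈ s, Matrix.of fun i j => f k (p.1, i) (q.1, j) := by
    ext i j; simp [Matrix.sum_apply]
  show E (Matrix.of fun i j => (∑ k ∈ s, f k) (p.1, i) (q.1, j)) p.2 q.2 = _
  rw [hslice, map_sum, Matrix.sum_apply, Matrix.sum_apply]
  rfl

end LocalMaps

theorem IsCP.posSemidef {A : Type*} [Fintype A] {E : Matrix A A ℂ →ₗ[ℂ] Matrix A A ℂ}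
    (hE : IsCP E) {M : Matrix A A ℂ} (hM : M.PosSemidef) : (E M).PosSemidef := by
  have h := hE PUnit (M.submatrix Prod.fst Prod.fst) (hM.submatrix Prod.fst)
  exact h.submatrix fun i => (i, PUnit.unit)

namespace SepCone

variable {A B : Type*} [Fintype A] [Fintype B]

theorem zero : SepCone (0 : Matrix (A × B) (A × B) ℂ) :=
  ⟨0, 0, 0, finZeroElim, finZeroElim, by simp⟩

theorem add {M N : Matrix (A × B) (A × B) ℂ} (hM : SepCone M) (hN : SepCone N) :
    SepCone (M + N) := by
  obtain ⟨m, σA, σB, hσA, hσB, rfl⟩ := hM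
  obtain ⟨k, τA, τB, hτA, hτB, rfl⟩ := hN
  refine ⟨m + k, Fin.append σA τA, Fin.append σB τB,
    Fin.addCases (by simpa using hσA) (by simpa using hτA),
    Fin.addCases (by simpa using hσB) (by simpa using hτB), ?_⟩
  simp [Fin.sum_univ_add]

theorem sum {ι : Type*} (s : Finset ι) {f : ι → Matrix (A × B) (A × B) ℂ}
    (h : ∀ i ∈ s, SepCone (f i)) : SepCone (∑ i ∈ s, f i) :=
  Finset.sum_induction f SepCone (fun _ _ => add) zero h

theorem smul {M : Matrix (A × B) (A × B) ℂ} (hM : SepCone M) {c : ℂ} (hc : 0 ≤ c) :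
    SepCone (c • M) := by
  obtain ⟨m, σA, σB, hσA, hσB, rfl⟩ := hM
  refine ⟨m, fun i => c • σA i, σB, fun i => (hσA i).smul hc, hσB, ?_⟩
  simp [smul_sum, smul_kronecker]

variable {A' B' : Type*} [Fintype A'] [Fintype B']

theorem blockFst {E : Matrix A A ℂ →ₗ[ℂ] Matrix A' A' ℂ}
    (hE : ∀ M, M.PosSemidef → (E M).PosSemidef) {M : Matrix (A × B) (A × B) ℂ}
    (hM : SepCone M) : SepCone (_root_.blockFst E M) := by
  obtain ⟨m, σA, σB, hσA, hσB, rfl⟩ := hM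
  refine ⟨m, fun i => E (σA i), σB, fun i => hE _ (hσA i), hσB, ?_⟩
  simp only [blockFst_sum, blockFst_kronecker]

theorem blockSnd {E : Matrix B B ℂ →ₗ[ℂ] Matrix B' B' ℂ}
    (hE : ∀ M, M.PosSemidef → (E M).PosSemidef) {M : Matrix (A × B) (A × B) ℂ}
    (hM : SepCone M) : SepCone (_root_.blockSnd E M) := by
  obtain ⟨m, σA, σB, hσA, hσB, rfl⟩ := hM
  refine ⟨m, σA, fun i => E (σB i), hσA, fun i => hE _ (hσB i), ?_⟩
  simp only [blockSnd_sum, blockSnd_kronecker]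

end SepCone

theorem sepCone_evolve {A B G : Type*} [Fintype A] [Fintype B] [Fintype G]
    {IA : ℕ → G → G → (Matrix A A ℂ →ₗ[ℂ] Matrix A A ℂ)}
    {IB : ℕ → G → G → (Matrix B B ℂ →ₗ[ℂ] Matrix B B ℂ)}
    (hIA : ∀ k g g', IsCP (IA k g g')) (hIB : ∀ k g g', IsCP (IB k g g'))
    {ρ : G → Matrix (A × B) (A × B) ℂ} (hρ : ∀ g, SepCone (ρ g)) (n : ℕ) (g : G) :
    SepCone (evolve IA IB n ρ g) := by
  induction n generalizing g with
  | zero => exact hρ g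
  | succ n ih =>
    have hstepA : ∀ g', SepCone (stepA (IA n) (evolve IA IB n ρ) g') := fun g' =>
      SepCone.sum _ fun g'' _ => (ih g'').blockFst fun _ => (hIA n g'' g').posSemidef
    exact SepCone.sum _ fun g' _ => (hstepA g').blockSnd fun _ => (hIB n g' g).posSemidef

theorem classical_mediator_no_entanglement_general
    {A B G : Type*} [Fintype A] [Fintype B] [Fintype G]
    (n : ℕ)
    (IA : ℕ → G → G → (Matrix A A ℂ →ₗ[ℂ] Matrix A A ℂ))
    (IB : ℕ → G → G → (Matrix B B ℂ →ₗ[ℂ] Matrix B B ℂ))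
    (hIA : ∀ k, IsQCInteraction (IA k)) (hIB : ∀ k, IsQCInteraction (IB k))
    (σ : Matrix (A × B) (A × B) ℂ) (hσ : SepCone σ)
    (p : G → ℝ) (hp : (∀ g, 0 ≤ p g) ∧ ∑ g, p g = 1) :
    SepCone (∑ g, evolve IA IB n (fun g => (p g : ℂ) • σ) g) :=
  SepCone.sum _ fun g _ =>
    sepCone_evolve (fun k => (hIA k).1) (fun k => (hIB k).1)
      (fun g => hσ.smul (Complex.zero_le_real.mpr (hp.1 g))) n g

/-- GPT no-go theorem, quantum instance: a finite sequence of alternating quantum-classical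
interactions mediated by a classical system `G` maps every initial state `σ_AB ⊗ p_G` with
`σ_AB` separable to a state whose `AB`-marginal is separable. Classical mediators cannot
generate entanglement. -/
theorem classical_mediator_no_entanglement
    {A B G : Type*} [Fintype A] [Fintype B] [Fintype G]
    (n : ℕ)
    (IA : ℕ → G → G → (Matrix A A ℂ →ₗ[ℂ] Matrix A A ℂ))
    (IB : ℕ → G → G → (Matrix B B ℂ →ₗ[ℂ] Matrix B B ℂ))
    (hIA : ∀ k, IsQCInteraction (IA k)) (hIB : ∀ k, IsQCInteraction (IB k))
    (σ : Matrix (A × B) (A × B) ℂ) (hσ : SepCone σ) (hσtr : σ.trace = 1)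
    (p : G → ℝ) (hp : (∀ g, 0 ≤ p g) ∧ ∑ g, p g = 1) :
    SepCone (∑ g, evolve IA IB n (fun g => (p g : ℂ) • σ) g) :=
  classical_mediator_no_entanglement_general n IA IB hIA hIB σ hσ p hp
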